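/- Let d ≥ 2 and let k be an integer with 2 < k ≤ 100. Let S_j denote the cyclic permutation operator on (ℂ^d)^{⊗j} and H_j = (S_j + S_j†)/2 the moment observable. Then there exist completely positive maps T_k and T̃_k on d^k×d^k complex matrices (i.e., each admits a finite Kraus representation T(X) = Σᵢ AᵢXAᵢ†) such that T_k(H_k) = H_{k−1} ⊗ (I_d/d) and T̃_k(H_k) = −H_{k−1} ⊗ (I_d/d), where H_{k−1} ⊗ (I_d/d) denotes the Kronecker product of H_{k−1} on the first k−1 tensor factors with I_d/d on the last factor. -/
import Mathlib


open Matrix BigOperators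

/-- The cyclic permutation operator `S_j` on `(ℂ^d)^{⊗j} ≅ ℂ^{d^j}`. -/
noncomputable def cyclicPermOp (d j : ℕ) : Matrix (Fin j → Fin d) (Fin j → Fin d) ℂ :=
  Matrix.of fun a b => if ∀ i, a i = b (finRotate j i) then 1 else 0

/-- The moment observable `H_j = (S_j + S_j†)/2`. -/
noncomputable def momentObs (d j : ℕ) : Matrix (Fin j → Fin d) (Fin j → Fin d) ℂ :=
  (1 / 2 : ℂ) • (cyclicPermOp d j + (cyclicPermOp d j)ᴴ)

/-- A linear map on `n × n` complex matrices is completely positive if it admits a finite Kraus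
representation `T(X) = Σᵢ AᵢXAᵢ†`. -/
def IsCP {n : Type*} [Fintype n] (T : Matrix n n ℂ →ₗ[ℂ] Matrix n n ℂ) : Prop :=
  ∃ (r : ℕ) (A : Fin r → Matrix n n ℂ), ∀ X, T X = ∑ i, A i * X * (A i)ᴴ

/-- `H_{k−1} ⊗ I_d/d` on `(ℂ^d)^{⊗k}` with `k = m+1`: the Kronecker product of the moment
observable on the first `m` tensor factors with `I_d/d` on the last factor. -/
noncomputable def momentObsInit (d m : ℕ) :
    Matrix (Fin (m + 1) → Fin d) (Fin (m + 1) → Fin d) ℂ :=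
  Matrix.of fun a b => momentObs d m (Fin.init a) (Fin.init b) *
    ((d : ℂ)⁻¹ * (if a (Fin.last m) = b (Fin.last m) then 1 else 0))

namespace CPAux
set_option linter.unusedSectionVars false

variable {n : Type*} [Fintype n] [DecidableEq n]

noncomputable def kraus {ι : Type*} [Fintype ι] (A : ι → Matrix n n ℂ) :
    Matrix n n ℂ →ₗ[ℂ] Matrix n n ℂ where
  toFun X := ∑ i, A i * X * (A i)ᴴ
  map_add' X Y := by simp [mul_add, add_mul, Finset.sum_add_distrib]
  map_smul' c X := by simp [Finset.smul_sum, mul_smul_comm, smul_mul_assoc]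

lemma isCP_kraus {ι : Type*} [Fintype ι] (A : ι → Matrix n n ℂ) : IsCP (kraus A) := by
  refine ⟨Fintype.card ι, fun i => A ((Fintype.equivFin ι).symm i), fun X => ?_⟩
  simpa [kraus] using (Equiv.sum_comp (Fintype.equivFin ι).symm fun j => A j * X * (A j)ᴴ).symm

lemma kraus_term (s : ℝ) (v w : n → ℂ) (X : Matrix n n ℂ) :
    ((s:ℂ) • vecMulVec w (star v)) * X * ((s:ℂ) • vecMulVec w (star v))ᴴ
      = ((s:ℂ)^2 * (star v ⬝ᵥ X *ᵥ v)) • vecMulVec w (star w) := by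
  ext i j
  simp only [conjTranspose_smul, Matrix.smul_mul, Matrix.mul_smul, Matrix.smul_apply,
    Matrix.mul_apply, Matrix.vecMulVec_apply, Matrix.conjTranspose_apply, Matrix.mulVec,
    dotProduct, star_mul', star_star, smul_eq_mul, Finset.sum_mul, Finset.mul_sum,
    Complex.star_def, Complex.conj_ofReal]
  rw [Finset.sum_comm]
  refine Finset.sum_congr rfl fun p _ => ?_
  refine Finset.sum_congr rfl fun q _ => ?_
  simp only [starRingEnd_apply, Pi.star_apply, star_star]
  ring


set_option linter.unusedSectionVars false

noncomputable def dvec {α : Type*} [DecidableEq α] (u : α) : α → ℂ := fun a => if a = u then 1 else 0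

lemma star_dvec {α : Type*} [DecidableEq α] (u : α) : star (dvec u) = dvec u := by
  funext a; simp only [Pi.star_apply, dvec]; split <;> simp

lemma dvec_quad {n : Type*} [Fintype n] [DecidableEq n] (M : Matrix n n ℂ) (u u' : n) :
    star (dvec u) ⬝ᵥ M *ᵥ dvec u' = M u u' := by
  rw [star_dvec]
  simp [dvec, dotProduct, mulVec, mul_ite, ite_mul, Finset.sum_ite_eq', Finset.mem_univ]

lemma momentObs_succ_apply (d k : ℕ) (u u' : Fin (k+1) → Fin d) :
    momentObs d (k+1) u u' = (1/2 : ℂ) *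
      ((if ∀ i, u i = u' (i+1) then (1:ℂ) else 0) +
       (if ∀ i, u' i = u (i+1) then (1:ℂ) else 0)) := by
  simp [momentObs, cyclicPermOp, finRotate_succ_apply]

noncomputable def vPlus (d m : ℕ) (z : Fin d) : (Fin (m+1) → Fin d) → ℂ :=
  dvec (fun _ => z)

noncomputable def vMinus (d m : ℕ) (z o : Fin d) : (Fin (m+1) → Fin d) → ℂ :=
  dvec (fun i => if i.val = m then o else z) - dvec (fun i => if i.val = 0 then o else z)

lemma expect_plus (d m : ℕ) (z : Fin d) :
    star (vPlus d m z) ⬝ᵥ (momentObs d (m+1)) *ᵥ (vPlus d m z) = 1 := by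
  rw [vPlus, dvec_quad, momentObs_succ_apply]
  norm_num

lemma expect_minus_aux (d k : ℕ) (A B : Fin (k+1) → Fin d)
    (h1 : ∀ i, A i = B (i+1)) (h2 : ¬∀ i, B i = A (i+1))
    (h3 : ¬∀ i, A i = A (i+1)) (h4 : ¬∀ i, B i = B (i+1)) :
    star (dvec A - dvec B) ⬝ᵥ momentObs d (k+1) *ᵥ (dvec A - dvec B) = -1 := by
  simp only [star_sub, sub_dotProduct, dotProduct_sub, Matrix.mulVec_sub]
  simp only [dvec_quad, momentObs_succ_apply]
  rw [if_pos h1, if_neg h2, if_neg h3, if_neg h4]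
  norm_num

lemma expect_minus (d m : ℕ) (z o : Fin d) (hzo : o ≠ z) (hm : 2 ≤ m) :
    star (vMinus d m z o) ⬝ᵥ (momentObs d (m+1)) *ᵥ (vMinus d m z o) = -1 := by
  rw [vMinus]
  apply expect_minus_aux
  · intro i
    by_cases h : i = Fin.last m
    · simp [h, Fin.val_add_one, Fin.val_last]
    · have hv : (i+1).val = i.val + 1 := by rw [Fin.val_add_one, if_neg h]
      have hvm : i.val ≠ m := fun hc => h (Fin.ext (by simp [hc, Fin.val_last]))
      simp [hv, hvm]
  · intro h
    have hne : (⟨0, by omega⟩ : Fin (m+1)) ≠ Fin.last m := by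
      simp [Fin.ext_iff, Fin.val_last]; omega
    have hv : ((⟨0, by omega⟩ : Fin (m+1)) + 1).val = 1 := by
      rw [Fin.val_add_one, if_neg hne]
    have h0 := h ⟨0, by omega⟩
    simp only [hv] at h0
    rw [if_pos trivial, if_neg (by omega)] at h0
    exact hzo h0
  · intro h
    have hv : ((Fin.last m) + 1).val = 0 := by rw [Fin.val_add_one, if_pos rfl]
    have h0 := h (Fin.last m)
    simp only [hv, Fin.val_last] at h0
    rw [if_pos trivial, if_neg (by omega)] at h0
    exact hzo h0
  · intro h
    have hne : (⟨0, by omega⟩ : Fin (m+1)) ≠ Fin.last m := by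
      simp [Fin.ext_iff, Fin.val_last]; omega
    have hv : ((⟨0, by omega⟩ : Fin (m+1)) + 1).val = 1 := by
      rw [Fin.val_add_one, if_neg hne]
    have h0 := h ⟨0, by omega⟩
    simp only [hv] at h0
    rw [if_pos trivial, if_neg (by omega)] at h0
    exact hzo h0
noncomputable def Wp (d m : ℕ) (b : Fin m → Fin d) (x : Fin d) : (Fin (m+1) → Fin d) → ℂ :=
  dvec (Fin.snoc (b ∘ finRotate m) x) + dvec (Fin.snoc b x)

noncomputable def Wm (d m : ℕ) (b : Fin m → Fin d) (x : Fin d) : (Fin (m+1) → Fin d) → ℂ :=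
  dvec (Fin.snoc (b ∘ finRotate m) x) - dvec (Fin.snoc b x)

lemma eq_snoc_iff {d m : ℕ} (a : Fin (m+1) → Fin d) (u : Fin m → Fin d) (x : Fin d) :
    a = Fin.snoc u x ↔ (Fin.init a = u ∧ a (Fin.last m) = x) := by
  constructor
  · rintro rfl
    exact ⟨by simp, by simp⟩
  · rintro ⟨h1, h2⟩
    rw [← h1, ← h2, Fin.snoc_init_self]

lemma ite_and_mul (P Q : Prop) [Decidable P] [Decidable Q] :
    (if P ∧ Q then (1:ℂ) else 0) = (if P then 1 else 0) * (if Q then 1 else 0) := by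
  split_ifs <;> simp_all

lemma sum1 {d m : ℕ} (a c : Fin (m+1) → Fin d) :
    ∑ p : (Fin m → Fin d) × Fin d,
        dvec (Fin.snoc (p.1 ∘ finRotate m) p.2) a * dvec (Fin.snoc p.1 p.2) c
      = (if Fin.init a = Fin.init c ∘ finRotate m then 1 else 0)
        * (if a (Fin.last m) = c (Fin.last m) then 1 else 0) := by
  rw [Finset.sum_eq_single (Fin.init c, c (Fin.last m))]
  · have hc : dvec (Fin.snoc (Fin.init c) (c (Fin.last m))) c = 1 := by
      simp [dvec]
    rw [hc, mul_one]
    show (if a = Fin.snoc (Fin.init c ∘ finRotate m) (c (Fin.last m)) then (1:ℂ) else 0) = _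
    rw [if_congr (eq_snoc_iff a _ _) rfl rfl, ite_and_mul]
  · rintro ⟨b, x⟩ - hne
    have hz : dvec (Fin.snoc b x) c = 0 := by
      simp only [dvec]
      rw [if_neg]
      intro hc
      obtain ⟨h1, h2⟩ := (eq_snoc_iff c b x).mp hc
      exact hne (Prod.ext h1.symm h2.symm)
    rw [hz, mul_zero]
  · intro h; exact absurd (Finset.mem_univ _) h

lemma sum2 {d m : ℕ} (a c : Fin (m+1) → Fin d) :
    ∑ p : (Fin m → Fin d) × Fin d,
        dvec (Fin.snoc p.1 p.2) a * dvec (Fin.snoc (p.1 ∘ finRotate m) p.2) c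
      = (if Fin.init c = Fin.init a ∘ finRotate m then 1 else 0)
        * (if a (Fin.last m) = c (Fin.last m) then 1 else 0) := by
  rw [Finset.sum_eq_single (Fin.init a, a (Fin.last m))]
  · have ha : dvec (Fin.snoc (Fin.init a) (a (Fin.last m))) a = 1 := by
      simp [dvec]
    rw [ha, one_mul]
    show (if c = Fin.snoc (Fin.init a ∘ finRotate m) (a (Fin.last m)) then (1:ℂ) else 0) = _
    rw [if_congr (eq_snoc_iff c _ _) rfl rfl, ite_and_mul]
    congr 1
    by_cases h : a (Fin.last m) = c (Fin.last m)
    · rw [if_pos h.symm, if_pos h]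
    · rw [if_neg (fun hc => h hc.symm), if_neg h]
  · rintro ⟨b, x⟩ - hne
    have hz : dvec (Fin.snoc b x) a = 0 := by
      simp only [dvec]
      rw [if_neg]
      intro hc
      obtain ⟨h1, h2⟩ := (eq_snoc_iff a b x).mp hc
      exact hne (Prod.ext h1.symm h2.symm)
    rw [hz, zero_mul]
  · intro h; exact absurd (Finset.mem_univ _) h

lemma sumC (d m : ℕ) (hd : d ≠ 0) :
    ∑ p : (Fin m → Fin d) × Fin d,
        (vecMulVec (Wp d m p.1 p.2) (star (Wp d m p.1 p.2))
          - vecMulVec (Wm d m p.1 p.2) (star (Wm d m p.1 p.2)))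
      = (4 * (d:ℂ)) • momentObsInit d m := by
  ext a c
  rw [Matrix.sum_apply]
  have hterm : ∀ p : (Fin m → Fin d) × Fin d,
      (vecMulVec (Wp d m p.1 p.2) (star (Wp d m p.1 p.2))
        - vecMulVec (Wm d m p.1 p.2) (star (Wm d m p.1 p.2))) a c
      = 2 * (dvec (Fin.snoc (p.1 ∘ finRotate m) p.2) a * dvec (Fin.snoc p.1 p.2) c)
        + 2 * (dvec (Fin.snoc p.1 p.2) a * dvec (Fin.snoc (p.1 ∘ finRotate m) p.2) c) := by
    rintro ⟨b, x⟩
    simp only [Matrix.sub_apply, vecMulVec_apply, Wp, Wm, star_add, star_sub, star_dvec,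
      Pi.add_apply, Pi.sub_apply]
    ring
  rw [Finset.sum_congr rfl (fun p _ => hterm p)]
  rw [Finset.sum_add_distrib, ← Finset.mul_sum, ← Finset.mul_sum, sum1, sum2]
  simp only [momentObsInit, Matrix.smul_apply, Matrix.of_apply, momentObs, cyclicPermOp,
    Matrix.add_apply, Matrix.conjTranspose_apply, Matrix.smul_apply, smul_eq_mul]
  have hfun1 : (Fin.init a = Fin.init c ∘ finRotate m) ↔
      (∀ i, Fin.init a i = Fin.init c (finRotate m i)) := by
    rw [funext_iff]; rfl
  have hfun2 : (Fin.init c = Fin.init a ∘ finRotate m) ↔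
      (∀ i, Fin.init c i = Fin.init a (finRotate m i)) := by
    rw [funext_iff]; rfl
  rw [if_congr hfun1 rfl rfl, if_congr hfun2 rfl rfl]
  have hdc : (d : ℂ) ≠ 0 := by exact_mod_cast hd
  split_ifs <;> simp <;> field_simp <;> ring

lemma build (d m : ℕ) (hd : 2 ≤ d) (hm : 2 ≤ m)
    (F G : (Fin m → Fin d) × Fin d → (Fin (m+1) → Fin d) → ℂ)
    (Y : Matrix (Fin (m+1) → Fin d) (Fin (m+1) → Fin d) ℂ)
    (hY : ∑ p : (Fin m → Fin d) × Fin d,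
        (vecMulVec (F p) (star (F p)) - vecMulVec (G p) (star (G p))) = (4*(d:ℂ)) • Y) :
    ∃ T : Matrix (Fin (m+1) → Fin d) (Fin (m+1) → Fin d) ℂ →ₗ[ℂ]
        Matrix (Fin (m+1) → Fin d) (Fin (m+1) → Fin d) ℂ,
      IsCP T ∧ T (momentObs d (m+1)) = Y := by
  have hd0 : d ≠ 0 := by omega
  set z : Fin d := ⟨0, by omega⟩ with hz
  set o : Fin d := ⟨1, by omega⟩ with ho
  have hoz : o ≠ z := by simp [hz, ho, Fin.ext_iff]
  set s : ℝ := (Real.sqrt (4*d))⁻¹ with hs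
  refine ⟨kraus (Sum.elim
      (fun p : (Fin m → Fin d) × Fin d => (s:ℂ) • vecMulVec (F p) (star (vPlus d m z)))
      (fun p : (Fin m → Fin d) × Fin d => (s:ℂ) • vecMulVec (G p) (star (vMinus d m z o)))),
    isCP_kraus _, ?_⟩
  have e1 := expect_plus d m z
  have e2 := expect_minus d m z o hoz hm
  simp only [kraus, LinearMap.coe_mk, AddHom.coe_mk, Fintype.sum_sum_type,
    Sum.elim_inl, Sum.elim_inr]
  rw [Finset.sum_congr rfl (fun p _ => kraus_term s (vPlus d m z) (F p) (momentObs d (m+1))),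
      Finset.sum_congr rfl (fun p _ => kraus_term s (vMinus d m z o) (G p) (momentObs d (m+1)))]
  simp only [e1, e2, mul_one, mul_neg_one, neg_smul]
  rw [Finset.sum_neg_distrib, ← Finset.smul_sum, ← Finset.smul_sum, ← sub_eq_add_neg,
    ← smul_sub, ← Finset.sum_sub_distrib, hY, smul_smul]
  have hsq : ((s:ℂ))^2 * (4*(d:ℂ)) = 1 := by
    have h1 : (s:ℝ)^2 = (4*(d:ℝ))⁻¹ := by
      rw [hs, inv_pow, Real.sq_sqrt (by positivity)]
    have h2 : ((s:ℂ))^2 = (((s:ℝ)^2 : ℝ) : ℂ) := by push_cast; ring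
    rw [h2, h1]
    have : ((4:ℂ)*(d:ℂ)) ≠ 0 := by
      simp [Complex.ext_iff]
      exact_mod_cast hd0
    push_cast
    field_simp
  rw [hsq, one_smul]

end CPAux

/-- with `k = m + 1`, `2 < k ≤ 100`: there exist completely positive maps `T_k`
and `T̃_k` on `d^k × d^k` matrices with `T_k(H_k) = H_{k−1} ⊗ (I_d/d)` and
`T̃_k(H_k) = −H_{k−1} ⊗ (I_d/d)`. -/
theorem exists_cp_permutation_transfer (d m : ℕ) (hd : 2 ≤ d) (hm : 2 ≤ m)
    (hk : m + 1 ≤ 100) :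
    ∃ T T' : Matrix (Fin (m + 1) → Fin d) (Fin (m + 1) → Fin d) ℂ →ₗ[ℂ]
        Matrix (Fin (m + 1) → Fin d) (Fin (m + 1) → Fin d) ℂ,
      IsCP T ∧ IsCP T' ∧
      T (momentObs d (m + 1)) = momentObsInit d m ∧
      T' (momentObs d (m + 1)) = -momentObsInit d m := by
  have hd0 : d ≠ 0 := by omega
  obtain ⟨T, hT, hTeq⟩ := CPAux.build d m hd hm
    (fun p => CPAux.Wp d m p.1 p.2) (fun p => CPAux.Wm d m p.1 p.2)
    (momentObsInit d m) (CPAux.sumC d m hd0)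
  obtain ⟨T', hT', hTeq'⟩ := CPAux.build d m hd hm
    (fun p => CPAux.Wm d m p.1 p.2) (fun p => CPAux.Wp d m p.1 p.2)
    (-momentObsInit d m) (by
      rw [smul_neg, ← CPAux.sumC d m hd0, ← Finset.sum_neg_distrib]
      exact Finset.sum_congr rfl fun p _ => by rw [neg_sub])
  exact ⟨T, T', hT, hT', hTeq, hTeq'⟩
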